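/- Let n ≥ 3 and consider the links-and-triangles SUGM on n nodes with parameters (β_L, β_T) ∈ [0,1]². For any three distinct nodes i, j, k, the covariance of the edge indicators g_ij and g_jk (two edges sharing the node j) equals β_T(1−β_T)(1−q̃_L)², where q̃_L = β_L + (1−β_L)(1−(1−β_T)^{n−3}). -/

import Mathlib

open MeasureTheory

/-- A Bernoulli measure on `Bool` with success probability `p`. -/
noncomputable def bern (p : ℝ) : Measure Bool :=
  ENNReal.ofReal p • Measure.dirac true + ENNReal.ofReal (1 - p) • Measure.dirac false

/-- The links-and-triangles SUGM on `n` nodes: independently, every pair of nodes forms a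
direct link with probability `βL`, and every triple of nodes forms a triangle with
probability `βT`. -/
noncomputable def sugm (n : ℕ) (βL βT : ℝ) : Measure (Finset (Fin n) → Bool) :=
  Measure.pi fun s => if s.card = 2 then bern βL else if s.card = 3 then bern βT else bern 0

/-- The observed graph: `i` and `j` are linked iff the direct link `{i, j}` formed or some
triangle `{i, j, k}` formed. -/
def edgeObs {n : ℕ} (ω : Finset (Fin n) → Bool) (i j : Fin n) : Bool :=
  ω {i, j} || decide (∃ k : Fin n, k ≠ i ∧ k ≠ j ∧ ω {i, j, k} = true)

/-- The real-valued indicator of the observed edge `ij`. -/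
noncomputable def edgeInd {n : ℕ} (i j : Fin n) (ω : Finset (Fin n) → Bool) : ℝ :=
  if edgeObs ω i j = true then 1 else 0

/-!
Write `1 - g_ij` as the indicator that none of the independent formation events producing the
edge `ij` occurred. The events producing `ij` and those producing `jk` are disjoint except for
the triangle `{i, j, k}`, so `1 - g_ij = N * X` and `1 - g_jk = N * Y` with `N, X, Y` independent
indicators and `𝔼 N = 1 - β_T`. Hence the covariance is `Var N * 𝔼 X * 𝔼 Y`, and
`𝔼 X = 𝔼 Y = (1 - β_L) (1 - β_T)^(n-3) = 1 - q̃_L`.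
-/

open ProbabilityTheory

theorem isProbabilityMeasure_bern {p : ℝ} (hp : p ∈ Set.Icc (0 : ℝ) 1) :
    IsProbabilityMeasure (bern p) := by
  constructor
  simp [bern, ← ENNReal.ofReal_add hp.1 (sub_nonneg.2 hp.2)]

theorem integral_bern {p : ℝ} (hp : p ∈ Set.Icc (0 : ℝ) 1) (f : Bool → ℝ) :
    ∫ b, f b ∂bern p = p * f true + (1 - p) * f false := by
  have := isProbabilityMeasure_bern hp
  rw [integral_fintype .of_finite]
  simp [bern, Measure.real, hp.1, hp.2]

theorem integral_finset_prod_pi {ι 𝕜 : Type*} [RCLike 𝕜] [Fintype ι] [DecidableEq ι]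
    {E : ι → Type*} {mE : ∀ i, MeasurableSpace (E i)} {μ : (i : ι) → Measure (E i)}
    [∀ i, IsProbabilityMeasure (μ i)] (S : Finset ι) (f : (i : ι) → E i → 𝕜) :
    ∫ x, ∏ i ∈ S, f i (x i) ∂Measure.pi μ = ∏ i ∈ S, ∫ x, f i x ∂μ i := by
  let g : (i : ι) → E i → 𝕜 := fun i => if i ∈ S then f i else fun _ => 1
  have hg : ∀ i, ∫ x, g i x ∂μ i = if i ∈ S then ∫ x, f i x ∂μ i else 1 := by
    intro i
    by_cases hi : i ∈ S <;> simp [g, hi]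
  have hfg : ∀ x : (i : ι) → E i, ∏ i ∈ S, f i (x i) = ∏ i, g i (x i) := by
    intro x
    simp [g, apply_ite (fun h : E _ → 𝕜 => h (x _)), Finset.prod_ite_mem]
  simp_rw [hfg, integral_fintype_prod_eq_prod, hg, Finset.prod_ite_mem, Finset.univ_inter]

theorem covariance_one_sub {Ω : Type*} {mΩ : MeasurableSpace Ω} {μ : Measure Ω}
    [IsProbabilityMeasure μ] {X Y : Ω → ℝ} (hX : MemLp X 2 μ) (hY : MemLp Y 2 μ) :
    cov[fun ω => 1 - X ω, fun ω => 1 - Y ω; μ] = cov[X, Y; μ] := by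
  have hY' : MemLp (fun ω => 1 - Y ω) 2 μ := (memLp_const 1).sub hY
  rw [covariance_fun_sub_left (memLp_const 1) hX hY', covariance_const_left,
    covariance_fun_sub_right hX (memLp_const 1) hY, covariance_const_right]
  ring

section noneFormed

variable {ι : Type*} [DecidableEq ι]

def noneFormed (S : Finset ι) (ω : ι → Bool) : ℝ :=
  if ∀ s ∈ S, ω s = false then 1 else 0

theorem noneFormed_union (S T : Finset ι) (ω : ι → Bool) :
    noneFormed (S ∪ T) ω = noneFormed S ω * noneFormed T ω := by
  simp only [noneFormed, Finset.forall_mem_union, ite_zero_mul_ite_zero, mul_one]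

variable [Fintype ι] (p : ι → ℝ)

theorem integral_noneFormed_pi (hp : ∀ i, p i ∈ Set.Icc (0 : ℝ) 1) (S : Finset ι) :
    ∫ ω, noneFormed S ω ∂Measure.pi (fun i => bern (p i)) = ∏ i ∈ S, (1 - p i) := by
  have := fun i => isProbabilityMeasure_bern (hp i)
  simp_rw [noneFormed, ← Finset.prod_boole]
  rw [integral_finset_prod_pi S fun _ b => if b = false then (1 : ℝ) else 0]
  simp [integral_bern (hp _)]

theorem covariance_noneFormed_insert_pi (hp : ∀ i, p i ∈ Set.Icc (0 : ℝ) 1) {t : ι} {A B : Finset ι} (hAB : Disjoint A B)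
    (htA : t ∉ A) (htB : t ∉ B) :
    cov[noneFormed (insert t A), noneFormed (insert t B); Measure.pi fun i => bern (p i)] =
      p t * (1 - p t) * (∏ i ∈ A, (1 - p i)) * ∏ i ∈ B, (1 - p i) := by
  have := fun i => isProbabilityMeasure_bern (hp i)
  rw [covariance_eq_sub .of_discrete .of_discrete]
  simp only [Pi.mul_apply, ← noneFormed_union, ← Finset.insert_union_distrib,
    integral_noneFormed_pi p hp, Finset.prod_insert htA, Finset.prod_insert htB,
    Finset.prod_insert (Finset.notMem_union.2 ⟨htA, htB⟩), Finset.prod_union hAB]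
  ring

end noneFormed

section sugmParam

variable {α : Type*} {βL βT : ℝ}

def sugmParam (βL βT : ℝ) (s : Finset α) : ℝ :=
  if s.card = 2 then βL else if s.card = 3 then βT else 0

theorem sugmParam_mem_Icc (hβL : βL ∈ Set.Icc (0 : ℝ) 1) (hβT : βT ∈ Set.Icc (0 : ℝ) 1)
    (s : Finset α) : sugmParam βL βT s ∈ Set.Icc (0 : ℝ) 1 := by
  unfold sugmParam
  split_ifs
  exacts [hβL, hβT, ⟨le_rfl, zero_le_one⟩]

variable [DecidableEq α]

theorem sugmParam_pair {i j : α} (hij : i ≠ j) : sugmParam βL βT {i, j} = βL := by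
  simp [sugmParam, Finset.card_pair hij]

theorem sugmParam_triangle {i j k : α} (hij : i ≠ j) (hik : i ≠ k) (hjk : j ≠ k) :
    sugmParam βL βT {i, j, k} = βT := by
  simp [sugmParam, Finset.card_eq_three.2 ⟨i, j, k, hij, hik, hjk, rfl⟩]

end sugmParam

theorem sugm_eq_pi (n : ℕ) (βL βT : ℝ) :
    sugm n βL βT = Measure.pi fun s => bern (sugmParam βL βT s) := by
  unfold sugm sugmParam
  congr 1
  funext s
  split_ifs <;> rfl

section otherSources

variable {α : Type*} [DecidableEq α] [Fintype α] {i j k : α}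

/-- The formation events other than the triangle `{i, j, k}` that produce the edge `ij`. -/
def otherSources (i j k : α) : Finset (Finset α) :=
  insert {i, j} (({i, j, k}ᶜ : Finset α).image fun l => {i, j, l})

theorem mem_otherSources {s : Finset α} :
    s ∈ otherSources i j k ↔ s = {i, j} ∨ ∃ l, l ≠ i ∧ l ≠ j ∧ l ≠ k ∧ s = {i, j, l} := by
  simp [otherSources, eq_comm, and_assoc]

theorem pair_subset_of_mem_otherSources {s : Finset α} (hs : s ∈ otherSources i j k) :
    {i, j} ⊆ s := by
  rcases mem_otherSources.1 hs with rfl | ⟨l, -, -, -, rfl⟩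
  · exact subset_rfl
  · exact Finset.insert_subset_insert _ (by simp)

theorem notMem_of_mem_otherSources (hki : k ≠ i) (hkj : k ≠ j) {s : Finset α}
    (hs : s ∈ otherSources i j k) : k ∉ s := by
  rcases mem_otherSources.1 hs with rfl | ⟨l, -, -, hlk, rfl⟩
  · simp [hki, hkj]
  · simp [hki, hkj, Ne.symm hlk]

theorem disjoint_otherSources (hjk : j ≠ k) (hik : i ≠ k) :
    Disjoint (otherSources i j k) (otherSources j k i) :=
  Finset.disjoint_left.2 fun _ hsA hsB =>
    notMem_of_mem_otherSources hik.symm hjk.symm hsA (pair_subset_of_mem_otherSources hsB (by simp))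

theorem prod_otherSources {M : Type*} [CommMonoid M] (f : Finset α → M) :
    ∏ s ∈ otherSources i j k, f s = f {i, j} * ∏ l ∈ ({i, j, k}ᶜ : Finset α), f {i, j, l} := by
  have hpair : ({i, j} : Finset α) ∉ ({i, j, k}ᶜ : Finset α).image fun l => {i, j, l} := by
    simp only [Finset.mem_image, Finset.mem_compl, not_exists, not_and]
    intro l hl he
    have : l ∈ ({i, j} : Finset α) := he ▸ by simp
    simp only [Finset.mem_insert, Finset.mem_singleton] at hl this
    tauto
  have hinj : Set.InjOn (fun l => ({i, j, l} : Finset α)) ({i, j, k}ᶜ : Finset α) := by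
    intro a ha b _ (he : ({i, j, a} : Finset α) = {i, j, b})
    have : a ∈ ({i, j, b} : Finset α) := he ▸ by simp
    simp only [Finset.coe_compl, Set.mem_compl_iff, Finset.mem_coe, Finset.mem_insert,
      Finset.mem_singleton, not_or] at ha this
    tauto
  rw [otherSources, Finset.prod_insert hpair, Finset.prod_image hinj]

theorem prod_one_sub_sugmParam_otherSources (βL βT : ℝ) (hij : i ≠ j) (hki : k ≠ i)
    (hkj : k ≠ j) :
    ∏ s ∈ otherSources i j k, (1 - sugmParam βL βT s) =
      (1 - βL) * (1 - βT) ^ (Fintype.card α - 3) := by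
  have htriangle : ∀ l ∈ ({i, j, k}ᶜ : Finset α), 1 - sugmParam βL βT {i, j, l} = 1 - βT := by
    intro l hl
    simp only [Finset.mem_compl, Finset.mem_insert, Finset.mem_singleton, not_or] at hl
    rw [sugmParam_triangle hij (Ne.symm hl.1) (Ne.symm hl.2.1)]
  rw [prod_otherSources, sugmParam_pair hij, Finset.prod_congr rfl htriangle, Finset.prod_const,
    Finset.card_compl, Finset.card_eq_three.2 ⟨i, j, k, hij, hki.symm, hkj.symm, rfl⟩]

end otherSources

section edgeObs

variable {n : ℕ} {i j k : Fin n}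

theorem edgeObs_eq_true_iff (hki : k ≠ i) (hkj : k ≠ j) (ω : Finset (Fin n) → Bool) :
    edgeObs ω i j = true ↔ ∃ s ∈ insert {i, j, k} (otherSources i j k), ω s = true := by
  simp only [edgeObs, Bool.or_eq_true, decide_eq_true_eq, Finset.exists_mem_insert,
    mem_otherSources]
  constructor
  · rintro (h | ⟨l, hli, hlj, hl⟩)
    · exact Or.inr ⟨_, Or.inl rfl, h⟩
    · by_cases hlk : l = k
      · exact Or.inl (hlk ▸ hl)
      · exact Or.inr ⟨_, Or.inr ⟨l, hli, hlj, hlk, rfl⟩, hl⟩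
  · rintro (h | ⟨s, rfl | ⟨l, hli, hlj, -, rfl⟩, h⟩)
    exacts [Or.inr ⟨k, hki, hkj, h⟩, Or.inl h, Or.inr ⟨l, hli, hlj, h⟩]

theorem edgeInd_eq_one_sub_noneFormed (hki : k ≠ i) (hkj : k ≠ j) :
    edgeInd i j = fun ω => 1 - noneFormed (insert {i, j, k} (otherSources i j k)) ω := by
  funext ω
  have hnone : (∀ s ∈ insert {i, j, k} (otherSources i j k), ω s = false) ↔
      ¬∃ s ∈ insert {i, j, k} (otherSources i j k), ω s = true := by
    simp
  simp only [edgeInd, noneFormed, edgeObs_eq_true_iff hki hkj, hnone]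
  split_ifs <;> norm_num

end edgeObs

theorem stmt7_general (n : ℕ) (βL βT : ℝ)
    (hβL : βL ∈ Set.Icc (0 : ℝ) 1) (hβT : βT ∈ Set.Icc (0 : ℝ) 1)
    (i j k : Fin n) (hij : i ≠ j) (hjk : j ≠ k) (hik : i ≠ k) :
    (∫ ω, edgeInd i j ω * edgeInd j k ω ∂(sugm n βL βT)) -
        (∫ ω, edgeInd i j ω ∂(sugm n βL βT)) * (∫ ω, edgeInd j k ω ∂(sugm n βL βT)) =
      βT * (1 - βT) * (1 - (βL + (1 - βL) * (1 - (1 - βT) ^ (n - 3)))) ^ 2 := by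
  have hp := sugmParam_mem_Icc (α := Fin n) hβL hβT
  have := fun s => isProbabilityMeasure_bern (hp s)
  have hjki : ({j, k, i} : Finset (Fin n)) = {i, j, k} := by
    rw [Finset.pair_comm k i, Finset.insert_comm]
  have hgij := edgeInd_eq_one_sub_noneFormed hik.symm hjk.symm
  have hgjk := hjki ▸ edgeInd_eq_one_sub_noneFormed (k := i) hij hik
  rw [sugm_eq_pi]
  calc _ = cov[edgeInd i j, edgeInd j k; Measure.pi fun s => bern (sugmParam βL βT s)] :=
        (covariance_eq_sub .of_discrete .of_discrete).symm
    _ = βT * (1 - βT) * ((1 - βL) * (1 - βT) ^ (n - 3)) * ((1 - βL) * (1 - βT) ^ (n - 3)) := by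
        rw [hgij, hgjk, covariance_one_sub .of_discrete .of_discrete,
          covariance_noneFormed_insert_pi _ hp (disjoint_otherSources hjk hik)
            (fun h => notMem_of_mem_otherSources hik.symm hjk.symm h (by simp))
            (fun h => notMem_of_mem_otherSources hij hik h (by simp)),
          sugmParam_triangle hij hik hjk,
          prod_one_sub_sugmParam_otherSources βL βT hij hik.symm hjk.symm,
          prod_one_sub_sugmParam_otherSources βL βT hjk hij hik, Fintype.card_fin]
    _ = _ := by ring

/-- In the links-and-triangles SUGM on `n ≥ 3` nodes with parameters
`(βL, βT) ∈ [0,1]²`, for distinct nodes `i, j, k`, the covariance of the edge indicators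
`g_ij` and `g_jk` equals `βT * (1-βT) * (1 - q̃L)²` with
`q̃L = βL + (1-βL)*(1-(1-βT)^(n-3))`. -/
theorem stmt7 (n : ℕ) (hn : 3 ≤ n) (βL βT : ℝ)
    (hβL : βL ∈ Set.Icc (0 : ℝ) 1) (hβT : βT ∈ Set.Icc (0 : ℝ) 1)
    (i j k : Fin n) (hij : i ≠ j) (hjk : j ≠ k) (hik : i ≠ k) :
    (∫ ω, edgeInd i j ω * edgeInd j k ω ∂(sugm n βL βT)) -
        (∫ ω, edgeInd i j ω ∂(sugm n βL βT)) * (∫ ω, edgeInd j k ω ∂(sugm n βL βT)) =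
      βT * (1 - βT) * (1 - (βL + (1 - βL) * (1 - (1 - βT) ^ (n - 3)))) ^ 2 :=
  stmt7_general n βL βT hβL hβT i j k hij hjk hik
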